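/- Let f, g : [R₁, R₂] × [−π, π] → ℂ be given by uniformly absolutely convergent Fourier series f(r,θ) = Σ_ℓ η_ℓ(f)(r) e^{iℓθ}, g(r,θ) = Σ_ℓ η_ℓ(g)(r) e^{iℓθ} with Σ_ℓ ‖η_ℓ(f)‖_∞ < ∞ and Σ_ℓ ‖η_ℓ(g)‖_∞ < ∞. Define ξ_ℓ(f)(s) = η_ℓ(f)(√s) s^{ℓ/2} on [R₁², R₂²]. Then for each k ∈ ℤ, ∫_{R₁}^{R₂} η_k(fg)(r) r^{k+1} dr = (1/2) Σ_{ℓ=−∞}^{∞} ∫_{R₁²}^{R₂²} ξ_ℓ(f)(s) ξ_{k−ℓ}(g)(s) ds, and the series on the right converges absolutely. -/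

import Mathlib

/-!
Substituting the Fourier series of `f` and `g`, the product `f g e^{-ikθ}` is an absolutely
convergent double series over `(ℓ, m) ∈ ℤ²`; integrating it termwise over `[-π, π]`, orthogonality
of the exponentials keeps only the antidiagonal `ℓ + m = k`, so
`η_k(fg)(r) = Σ_ℓ η_ℓ(f)(r) η_{k-ℓ}(g)(r)`. The sup-norm bounds on the coefficients dominate this
series uniformly in `r`, so it may be integrated termwise in `r` as well, and each term turns into
the corresponding `ξ`-integral under `s = r²`.
-/

open Complex Set MeasureTheory intervalIntegral
open scoped Real

theorem norm_le_iSup_norm_of_continuousOn {α E : Type*} [TopologicalSpace α] [NormedAddCommGroup E]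
    {s : Set α} (hs : IsCompact s) {φ : α → E} (hφ : ContinuousOn φ s) {x : α} (hx : x ∈ s) :
    ‖φ x‖ ≤ ⨆ y ∈ s, ‖φ y‖ := by
  obtain ⟨C, hC⟩ := hs.exists_bound_of_continuousOn hφ
  refine le_ciSup₂ (f := fun y (_ : y ∈ s) => ‖φ y‖) ⟨C, ?_⟩ x hx
  rintro _ ⟨_, ⟨y, rfl⟩, ⟨hy, rfl⟩⟩
  exact hC y hy

theorem integral_exp_int_mul_I (n : ℤ) :
    ∫ θ in -π..π, exp (n * θ * I) = if n = 0 then 2 * (π : ℂ) else 0 := by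
  split_ifs with hn
  · simp [hn, two_mul]
  have hc : (n : ℂ) * I ≠ 0 := mul_ne_zero (Int.cast_ne_zero.2 hn) I_ne_zero
  simp_rw [mul_right_comm _ _ I]
  rw [integral_exp_mul_complex hc, div_eq_zero_iff, sub_eq_zero]
  left
  -- `nπi` and `-nπi` differ by `n` periods `2πi`
  exact exp_eq_exp_iff_exists_int.2 ⟨n, by push_cast; ring⟩

theorem hasSum_intervalIntegral_of_norm_le {ι E : Type*} [Countable ι] [NormedAddCommGroup E]
    [NormedSpace ℝ E] {a b : ℝ} {U : ι → ℝ → E} {S : ℝ → E} {M : ι → ℝ}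
    (hU : ∀ i, IntervalIntegrable (U i) volume a b) (hUM : ∀ i, ∀ r ∈ uIcc a b, ‖U i r‖ ≤ M i)
    (hM : Summable M) (hS : ∀ r ∈ uIcc a b, HasSum (fun i => U i r) (S r)) :
    HasSum (fun i => ∫ r in a..b, U i r) (∫ r in a..b, S r) :=
  hasSum_integral_of_dominated_convergence (fun i _ => M i)
    (fun i => (hU i).def'.aestronglyMeasurable)
    (fun i => .of_forall fun r hr => hUM i r (uIoc_subset_uIcc hr))
    (.of_forall fun _ _ => hM) intervalIntegrable_const
    (.of_forall fun r hr => hS r (uIoc_subset_uIcc hr))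

theorem hasSum_intervalIntegral_mul_exp_neg {ι : Type*} [Countable ι] {c : ι → ℂ} (n : ι → ℤ)
    (hc : Summable fun i => ‖c i‖) {H : ℝ → ℂ}
    (hH : ∀ θ : ℝ, HasSum (fun i => c i * exp (n i * θ * I)) (H θ)) (k : ℤ) :
    HasSum (fun i => if n i = k then 2 * π * c i else 0)
      (∫ θ in -π..π, H θ * exp (-(k * θ) * I)) := by
  have hterm : ∀ i, ∫ θ in -π..π, c i * exp (n i * θ * I) * exp (-(k * θ) * I)
      = if n i = k then 2 * π * c i else 0 := by
    intro i
    have hfreq : ∀ θ : ℝ, (n i : ℂ) * θ * I + -(k * θ) * I = ((n i - k : ℤ) : ℂ) * θ * I := by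
      intro θ; push_cast; ring
    simp_rw [mul_assoc (c i), ← exp_add, hfreq]
    rw [intervalIntegral.integral_const_mul, integral_exp_int_mul_I]
    simp only [sub_eq_zero]
    split_ifs <;> ring
  have hbound : ∀ i, ∀ θ ∈ uIcc (-π) π, ‖c i * exp (n i * θ * I) * exp (-(k * θ) * I)‖ ≤ ‖c i‖ := by
    intro i θ _
    simp [norm_exp]
  have hcont : ∀ i, Continuous fun θ : ℝ => c i * exp (n i * θ * I) * exp (-(k * θ) * I) := by
    intro i; fun_prop
  simpa only [hterm] using hasSum_intervalIntegral_of_norm_le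
    (fun i => (hcont i).intervalIntegrable _ _) hbound hc fun θ _ => (hH θ).mul_right _

theorem hasSum_fourierCoeff_mul {a b : ℤ → ℂ} (ha : Summable fun ℓ => ‖a ℓ‖)
    (hb : Summable fun ℓ => ‖b ℓ‖) {F G : ℝ → ℂ}
    (hF : ∀ θ : ℝ, HasSum (fun ℓ : ℤ => a ℓ * exp (ℓ * θ * I)) (F θ))
    (hG : ∀ θ : ℝ, HasSum (fun ℓ : ℤ => b ℓ * exp (ℓ * θ * I)) (G θ)) (k : ℤ) :
    HasSum (fun ℓ => a ℓ * b (k - ℓ))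
      (1 / (2 * π) * ∫ θ in -π..π, F θ * G θ * exp (-(k * θ) * I)) := by
  have hnorm : ∀ (c : ℤ → ℂ) (θ : ℝ), Summable (fun ℓ => ‖c ℓ‖) →
      Summable fun ℓ : ℤ => ‖c ℓ * exp (ℓ * θ * I)‖ := fun c θ hc => by
    simpa [norm_exp] using hc
  have hFG : ∀ θ : ℝ, HasSum (fun p : ℤ × ℤ => a p.1 * b p.2 * exp ((p.1 + p.2 : ℤ) * θ * I))
      (F θ * G θ) := by
    intro θ
    have hs := summable_mul_of_summable_norm (hnorm a θ ha) (hnorm b θ hb)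
    refine ((hF θ).mul (hG θ) hs).congr_fun fun p => ?_
    push_cast
    rw [add_mul, add_mul, exp_add]
    ring
  have hdiag : Function.Injective fun ℓ : ℤ => (ℓ, k - ℓ) := fun _ _ h => congrArg Prod.fst h
  have hoff : ∀ p ∉ range fun ℓ : ℤ => (ℓ, k - ℓ),
      (if p.1 + p.2 = k then 2 * π * (a p.1 * b p.2) else 0) = 0 := fun p hp =>
    if_neg fun h => hp ⟨p.1, by ext <;> simp; omega⟩
  have h2π := (hdiag.hasSum_iff hoff).2
    (hasSum_intervalIntegral_mul_exp_neg (fun p : ℤ × ℤ => p.1 + p.2) (ha.mul_norm hb) hFG k)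
  refine (h2π.mul_left (1 / (2 * (π : ℂ)))).congr_fun fun ℓ => ?_
  simp only [Function.comp_apply, add_sub_cancel, if_true]
  field_simp

theorem integral_comp_sqrt {E : Type*} [NormedAddCommGroup E] [NormedSpace ℝ E] {a b : ℝ}
    (ha : 0 ≤ a) (hb : 0 ≤ b) (w : ℝ → E) :
    ∫ s in a ^ 2..b ^ 2, w (√s) = ∫ r in a..b, (2 * r) • w r := by
  have hnonneg : ∀ r ∈ uIcc a b, 0 ≤ r := fun r hr => (le_min ha hb).trans hr.1
  rw [← integral_deriv_smul_comp_of_deriv_nonneg (f := fun r => r ^ 2) (by fun_prop)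
    (fun r _ => by simpa using hasDerivAt_pow 2 r)
    (fun r hr => by have := hnonneg r (Ioo_subset_Icc_self hr); positivity)]
  refine integral_congr fun r hr => ?_
  simp [Real.sqrt_sq (hnonneg r hr)]

theorem integral_mul_zpow_comp_sqrt {a b : ℝ} (ha : 0 < a) (hb : 0 < b) (u v : ℝ → ℂ) (m n : ℤ) :
    ∫ s in a ^ 2..b ^ 2, (u √s * (√s : ℂ) ^ m) * (v √s * (√s : ℂ) ^ n)
      = 2 * ∫ r in a..b, u r * v r * (r : ℂ) ^ (m + n + 1) := by
  rw [integral_comp_sqrt ha.le hb.le (fun r => u r * (r : ℂ) ^ m * (v r * (r : ℂ) ^ n)),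
    ← intervalIntegral.integral_const_mul]
  refine integral_congr fun r hr => ?_
  have hr : (r : ℂ) ≠ 0 := ofReal_ne_zero.2 (lt_min ha hb |>.trans_le hr.1).ne'
  simp only [zpow_add₀ hr, zpow_one, real_smul]
  push_cast
  ring

theorem exists_summable_bound_mul_sub_mul {a b : ℝ} {u v : ℤ → ℝ → ℂ} {w : ℝ → ℂ}
    (hu : ∀ ℓ, ContinuousOn (u ℓ) (uIcc a b)) (hv : ∀ ℓ, ContinuousOn (v ℓ) (uIcc a b))
    (hw : ContinuousOn w (uIcc a b)) (husum : Summable fun ℓ => ⨆ r ∈ uIcc a b, ‖u ℓ r‖)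
    (hvsum : Summable fun ℓ => ⨆ r ∈ uIcc a b, ‖v ℓ r‖) (k : ℤ) :
    ∃ M : ℤ → ℝ, Summable M ∧ ∀ ℓ, ∀ r ∈ uIcc a b, ‖u ℓ r * v (k - ℓ) r * w r‖ ≤ M ℓ := by
  have hsup₀ : ∀ φ : ℝ → ℂ, 0 ≤ ⨆ r ∈ uIcc a b, ‖φ r‖ := fun φ =>
    Real.iSup_nonneg fun _ => Real.iSup_nonneg fun _ => norm_nonneg _
  obtain ⟨C, hC⟩ := isCompact_uIcc.exists_bound_of_continuousOn hw
  have hdiag : Function.Injective fun ℓ : ℤ => (ℓ, k - ℓ) := fun _ _ h => congrArg Prod.fst h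
  refine ⟨fun ℓ => (⨆ r ∈ uIcc a b, ‖u ℓ r‖) * (⨆ r ∈ uIcc a b, ‖v (k - ℓ) r‖) * C,
    ((husum.mul_of_nonneg hvsum (fun _ => hsup₀ _) fun _ => hsup₀ _).comp_injective
      hdiag).mul_right C,
    fun ℓ r hr => ?_⟩
  rw [norm_mul, norm_mul]
  exact mul_le_mul
    (mul_le_mul (norm_le_iSup_norm_of_continuousOn isCompact_uIcc (hu ℓ) hr)
      (norm_le_iSup_norm_of_continuousOn isCompact_uIcc (hv (k - ℓ)) hr) (norm_nonneg _) (hsup₀ _))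
    (hC r hr) (norm_nonneg _) (mul_nonneg (hsup₀ _) (hsup₀ _))

/-- For `f, g` given by uniformly absolutely convergent Fourier
series in `θ` with coefficients `η_ℓ(f), η_ℓ(g)`, and `ξ_ℓ(f)(s) = η_ℓ(f)(√s) s^{ℓ/2}`,
one has, for each `k ∈ ℤ`,
`∫_{R₁}^{R₂} η_k(fg)(r) r^{k+1} dr = (1/2) ∑_{ℓ∈ℤ} ∫_{R₁²}^{R₂²} ξ_ℓ(f)(s) ξ_{k−ℓ}(g)(s) ds`,
the series on the right converging absolutely. Here
`η_k(fg)(r) = (1/2π)∫_{−π}^{π} f(r,θ)g(r,θ)e^{−ikθ} dθ`. -/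
theorem stmt16 (R₁ R₂ : ℝ) (hR₁ : 0 < R₁) (hR₁₂ : R₁ < R₂)
    (ηf ηg : ℤ → ℝ → ℂ)
    (hηfcont : ∀ ℓ, ContinuousOn (ηf ℓ) (Set.Icc R₁ R₂))
    (hηgcont : ∀ ℓ, ContinuousOn (ηg ℓ) (Set.Icc R₁ R₂))
    (hfsum : Summable (fun ℓ : ℤ => ⨆ r ∈ Set.Icc R₁ R₂, ‖ηf ℓ r‖))
    (hgsum : Summable (fun ℓ : ℤ => ⨆ r ∈ Set.Icc R₁ R₂, ‖ηg ℓ r‖))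
    (f g : ℝ → ℝ → ℂ)
    (hf : ∀ r ∈ Set.Icc R₁ R₂, ∀ θ : ℝ,
      HasSum (fun ℓ : ℤ => ηf ℓ r * Complex.exp (ℓ * θ * Complex.I)) (f r θ))
    (hg : ∀ r ∈ Set.Icc R₁ R₂, ∀ θ : ℝ,
      HasSum (fun ℓ : ℤ => ηg ℓ r * Complex.exp (ℓ * θ * Complex.I)) (g r θ)) :
    ∀ k : ℤ,
      Summable (fun ℓ : ℤ =>
        ‖∫ s in (R₁ ^ 2)..(R₂ ^ 2),
          (ηf ℓ (Real.sqrt s) * (Real.sqrt s : ℂ) ^ ℓ) *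
            (ηg (k - ℓ) (Real.sqrt s) * (Real.sqrt s : ℂ) ^ (k - ℓ))‖) ∧
      (∫ r in R₁..R₂,
          ((1 / (2 * (Real.pi : ℂ))) *
            ∫ θ in (-Real.pi)..Real.pi,
              f r θ * g r θ * Complex.exp (-(k * θ) * Complex.I)) *
            (r : ℂ) ^ (k + 1)) =
        (1 / 2) * ∑' ℓ : ℤ, ∫ s in (R₁ ^ 2)..(R₂ ^ 2),
          (ηf ℓ (Real.sqrt s) * (Real.sqrt s : ℂ) ^ ℓ) *
            (ηg (k - ℓ) (Real.sqrt s) * (Real.sqrt s : ℂ) ^ (k - ℓ)) := by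
  intro k
  rw [← uIcc_of_le hR₁₂.le] at hηfcont hηgcont hfsum hgsum hf hg
  have hpow : ContinuousOn (fun r : ℝ => (r : ℂ) ^ (k + 1)) (uIcc R₁ R₂) :=
    continuous_ofReal.continuousOn.zpow₀ _ fun r hr =>
      .inl (ofReal_ne_zero.2 (hR₁.trans_le (by simpa [hR₁₂.le] using hr.1)).ne')
  obtain ⟨M, hM, hUM⟩ := exists_summable_bound_mul_sub_mul hηfcont hηgcont hpow hfsum hgsum k
  have hcoef := fun r (hr : r ∈ uIcc R₁ R₂) =>
    hasSum_fourierCoeff_mul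
      (.of_nonneg_of_le (fun _ => norm_nonneg _)
        (fun ℓ => norm_le_iSup_norm_of_continuousOn isCompact_uIcc (hηfcont ℓ) hr) hfsum)
      (.of_nonneg_of_le (fun _ => norm_nonneg _)
        (fun ℓ => norm_le_iSup_norm_of_continuousOn isCompact_uIcc (hηgcont ℓ) hr) hgsum)
      (hf r hr) (hg r hr) k
  have hint := hasSum_intervalIntegral_of_norm_le
    (U := fun ℓ r => ηf ℓ r * ηg (k - ℓ) r * (r : ℂ) ^ (k + 1))
    (fun ℓ => (((hηfcont ℓ).mul (hηgcont (k - ℓ))).mul hpow).intervalIntegrable) hUM hM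
    fun r hr => (hcoef r hr).mul_right ((r : ℂ) ^ (k + 1))
  have hsubst : ∀ ℓ : ℤ, ∫ s in R₁ ^ 2..R₂ ^ 2,
      (ηf ℓ √s * (√s : ℂ) ^ ℓ) * (ηg (k - ℓ) √s * (√s : ℂ) ^ (k - ℓ))
        = 2 * ∫ r in R₁..R₂, ηf ℓ r * ηg (k - ℓ) r * (r : ℂ) ^ (k + 1) := fun ℓ => by
    rw [integral_mul_zpow_comp_sqrt hR₁ (hR₁.trans hR₁₂), add_sub_cancel]
  refine ⟨?_, ?_⟩
  · refine .of_nonneg_of_le (fun _ => norm_nonneg _) (fun ℓ => ?_)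
      ((hM.mul_right |R₂ - R₁|).mul_left 2)
    rw [hsubst, norm_mul, RCLike.norm_two]
    gcongr
    exact norm_integral_le_of_norm_le_const fun r hr => hUM ℓ r (uIoc_subset_uIcc hr)
  · rw [tsum_congr hsubst, tsum_mul_left, hint.tsum_eq]
    ring
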